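/- arXiv:math/0305311 — 9 statements merged into one kernel-verified Lean document; each statement's English description precedes it below -/
import Mathlib

section
/- Let K be a field, V a finite-dimensional K-vector space, A_1,...,A_r ∈ GL(V), and λ ∈ K^× with λ ≠ 1. Define B_k ∈ GL(V^r) acting on (v_1,...,v_r) by leaving all components fixed except the k-th, which becomes λ(A_1−1)v_1 + ... + λ(A_{k−1}−1)v_{k−1} + λA_k v_k + (A_{k+1}−1)v_{k+1} + ... + (A_r−1)v_r. Then the subspace L := ∩_{k=1}^r ker(B_k − 1) equals the set of vectors ((A_2⋯A_r)v, (A_3⋯A_r)v, ..., A_r v, v) with v ∈ ker(λ·A_1⋯A_r − 1). -/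
open Module

variable {K : Type*} [Field K] {V : Type*} [AddCommGroup V] [Module K V]

/-- The `i`-th block entry of the `k`-th row of the convolution matrix. -/
noncomputable def coeffB {r : ℕ} (A : Fin r → Module.End K V) (lam : K) (k i : Fin r) :
    Module.End K V :=
  if i < k then lam • (A i - 1) else if i = k then lam • A k else (A i - 1)

/-- The convolution endomorphism `B_k` of `V^r`. -/
noncomputable def Bconv {r : ℕ} (A : Fin r → Module.End K V) (lam : K) (k : Fin r) :
    Module.End K (Fin r → V) :=
  LinearMap.pi fun j =>
    if j = k then ∑ i : Fin r, (coeffB A lam k i).comp (LinearMap.proj i)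
    else LinearMap.proj j

section aux

variable {r : ℕ} (A : Fin r → Module.End K V) (lam : K)

private lemma bconv_fixed_iff (k : Fin r) (v : Fin r → V) :
    Bconv A lam k v = v ↔
      (∑ i, (A i (v i) - v i))
        + (lam - 1) • (∑ i, if i ≤ k then A i (v i) - v i else 0)
        + lam • v k = v k := by
  have happ : ∀ j, Bconv A lam k v j
      = if j = k then ∑ i, coeffB A lam k i (v i) else v j := by
    intro j
    by_cases hj : j = k
    · subst hj
      simp [Bconv, LinearMap.pi_apply, LinearMap.sum_apply]
    · simp [Bconv, LinearMap.pi_apply, hj]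
  have hterm : ∀ i : Fin r, coeffB A lam k i (v i)
      = ((A i (v i) - v i) + (lam - 1) • (if i ≤ k then A i (v i) - v i else 0))
        + (if i = k then lam • v k else 0) := by
    intro i
    unfold coeffB
    rcases lt_trichotomy i k with h | h | h
    · rw [if_pos h, if_pos h.le, if_neg h.ne, add_zero]
      simp only [LinearMap.smul_apply, LinearMap.sub_apply, Module.End.one_apply]
      module
    · subst h
      rw [if_neg (lt_irrefl i), if_pos rfl, if_pos le_rfl, if_pos rfl]
      simp only [LinearMap.smul_apply]
      module
    · rw [if_neg (not_lt.mpr h.le), if_neg h.ne', if_neg (not_le.mpr h), if_neg h.ne', add_zero,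
        smul_zero, add_zero]
      simp [LinearMap.sub_apply]
  have hsum : (∑ i, coeffB A lam k i (v i))
      = (∑ i, (A i (v i) - v i))
        + (lam - 1) • (∑ i, if i ≤ k then A i (v i) - v i else 0)
        + lam • v k := by
    rw [Finset.sum_congr rfl fun i _ => hterm i, Finset.sum_add_distrib,
      Finset.sum_add_distrib, Finset.sum_ite_eq' Finset.univ k fun _ => lam • v k,
      if_pos (Finset.mem_univ k), Finset.smul_sum]
  constructor
  · intro h
    have := congrFun h k
    rw [happ k, if_pos rfl, hsum] at this
    exact this
  · intro h
    funext j
    rw [happ j]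
    by_cases hj : j = k
    · subst hj
      rw [if_pos rfl, hsum]
      exact h
    · rw [if_neg hj]

private lemma filter_sum_eq (w : V) (k : Fin r) :
    (∑ j : Fin r, if j ≤ k then
        (A j ((((List.ofFn A).drop ((j : ℕ) + 1)).prod) w)
          - (((List.ofFn A).drop ((j : ℕ) + 1)).prod) w) else 0)
      = ((List.ofFn A).prod) w - (((List.ofFn A).drop ((k : ℕ) + 1)).prod) w := by
  set F : ℕ → V := fun m => (((List.ofFn A).drop m).prod) w with hF
  have hAF : ∀ j : Fin r, A j (F ((j : ℕ) + 1)) = F (j : ℕ) := by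
    intro j
    have hlen : (j : ℕ) < (List.ofFn A).length := by simp [j.isLt]
    simp only [hF]
    rw [List.drop_eq_getElem_cons hlen, List.prod_cons, List.getElem_ofFn]
    simp [Module.End.mul_apply]
  have h1 : (∑ j : Fin r, if j ≤ k then
        (A j ((((List.ofFn A).drop ((j : ℕ) + 1)).prod) w)
          - (((List.ofFn A).drop ((j : ℕ) + 1)).prod) w) else 0)
      = ∑ j : Fin r, (fun m => if m ≤ (k : ℕ) then F m - F (m + 1) else 0) (j : ℕ) := by
    refine Finset.sum_congr rfl fun j _ => ?_
    simp only [Fin.le_iff_val_le_val, hAF j]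
    rw [← hAF j]
  rw [h1, Fin.sum_univ_eq_sum_range (fun m => if m ≤ (k : ℕ) then F m - F (m + 1) else 0) r,
    ← Finset.sum_filter]
  have h2 : (Finset.range r).filter (fun m => m ≤ (k : ℕ)) = Finset.range ((k : ℕ) + 1) := by
    ext m
    simp only [Finset.mem_filter, Finset.mem_range, Nat.lt_succ_iff]
    have := k.isLt
    omega
  rw [h2, Finset.sum_range_sub' F ((k : ℕ) + 1)]
  simp [hF]

private lemma total_sum_eq (w : V) :
    (∑ j : Fin r, (A j ((((List.ofFn A).drop ((j : ℕ) + 1)).prod) w)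
        - (((List.ofFn A).drop ((j : ℕ) + 1)).prod) w))
      = ((List.ofFn A).prod) w - w := by
  set F : ℕ → V := fun m => (((List.ofFn A).drop m).prod) w with hF
  have hAF : ∀ j : Fin r, A j (F ((j : ℕ) + 1)) = F (j : ℕ) := by
    intro j
    have hlen : (j : ℕ) < (List.ofFn A).length := by simp [j.isLt]
    simp only [hF]
    rw [List.drop_eq_getElem_cons hlen, List.prod_cons, List.getElem_ofFn]
    simp [Module.End.mul_apply]
  have h1 : (∑ j : Fin r, (A j ((((List.ofFn A).drop ((j : ℕ) + 1)).prod) w)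
        - (((List.ofFn A).drop ((j : ℕ) + 1)).prod) w))
      = ∑ j : Fin r, (fun m => F m - F (m + 1)) (j : ℕ) := by
    refine Finset.sum_congr rfl fun j _ => ?_
    simp only [hAF j]
    rw [← hAF j]
  rw [h1, Fin.sum_univ_eq_sum_range (fun m => F m - F (m + 1)) r,
    Finset.sum_range_sub' F r]
  have hr : (List.ofFn A).drop r = [] := by
    apply List.drop_eq_nil_of_le
    simp
  simp [hF, hr]

end aux

/-- The common fixed space `L = ∩ ker(B_k − 1)` equals
`{((A₂⋯A_r)v, …, A_r v, v) : v ∈ ker(λ·A₁⋯A_r − 1)}`. -/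
theorem stmt0 {r : ℕ} (A : Fin r → Module.End K V) (hA : ∀ i, Function.Bijective (A i))
    (lam : K) (hl0 : lam ≠ 0) (hl1 : lam ≠ 1) :
    {v : Fin r → V | ∀ k, Bconv A lam k v = v} =
      {v : Fin r → V | ∃ w : V, (lam • (List.ofFn A).prod) w = w ∧
        v = fun j : Fin r => (((List.ofFn A).drop ((j : ℕ) + 1)).prod) w} := by
  have hne : lam - 1 ≠ 0 := sub_ne_zero.mpr hl1
  ext v
  simp only [Set.mem_setOf_eq]
  constructor
  · intro hv
    rcases Nat.eq_zero_or_pos r with hr0 | hrpos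
    · subst hr0
      refine ⟨0, by simp, funext fun j => j.elim0⟩
    obtain ⟨n, rfl⟩ : ∃ n, r = n + 1 := ⟨r - 1, (Nat.succ_pred_eq_of_pos hrpos).symm⟩
    have hE : ∀ k : Fin (n + 1),
        (∑ i, (A i (v i) - v i))
          + (lam - 1) • (∑ i, if i ≤ k then A i (v i) - v i else 0)
          + lam • v k = v k := fun k => (bconv_fixed_iff A lam k v).mp (hv k)
    -- step relation
    have hstep : ∀ i : Fin n, v i.castSucc = A i.succ (v i.succ) := by
      intro i
      have hdiff : (∑ j, if j ≤ i.succ then A j (v j) - v j else 0)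
          = (∑ j, if j ≤ i.castSucc then A j (v j) - v j else 0)
            + (A i.succ (v i.succ) - v i.succ) := by
        have hterm : ∀ j : Fin (n + 1), (if j ≤ i.succ then A j (v j) - v j else 0)
            = (if j ≤ i.castSucc then A j (v j) - v j else 0)
              + (if j = i.succ then A j (v j) - v j else 0) := by
          intro j
          rcases lt_trichotomy j i.succ with h | h | h
          · rw [if_pos h.le, if_pos (Fin.le_castSucc_iff.mpr h), if_neg h.ne, add_zero]
          · subst h
            rw [if_pos le_rfl, if_neg (by rw [Fin.le_castSucc_iff]; exact lt_irrefl _),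
              if_pos rfl, zero_add]
          · rw [if_neg (not_le.mpr h),
              if_neg (not_le.mpr ((Fin.castSucc_lt_succ (i := i)).trans h)), if_neg h.ne', add_zero]
        rw [Finset.sum_congr rfl fun j _ => hterm j, Finset.sum_add_distrib,
          Finset.sum_ite_eq' Finset.univ i.succ, if_pos (Finset.mem_univ _)]
      have h1 := hE i.castSucc
      have h2 := hE i.succ
      rw [hdiff] at h2
      have h3 : (lam - 1) • (v i.castSucc - A i.succ (v i.succ)) = 0 := by
        linear_combination (norm := module) h1 - h2
      have h4 : v i.castSucc - A i.succ (v i.succ) = 0 := by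
        have := congrArg (fun x => (lam - 1)⁻¹ • x) h3
        simpa [smul_smul, inv_mul_cancel₀ hne] using this
      exact sub_eq_zero.mp h4
    set w : V := v (Fin.last n) with hwdef
    have hval : ∀ j : Fin (n + 1),
        v j = (((List.ofFn A).drop ((j : ℕ) + 1)).prod) w := by
      intro j
      induction j using Fin.reverseInduction with
      | last =>
        have hnil : (List.ofFn A).drop ((Fin.last n : ℕ) + 1) = [] := by
          apply List.drop_eq_nil_of_le
          simp
        rw [hnil]
        simp [hwdef]
      | cast i ih =>
        rw [hstep i, ih]
        have hlen : ((i : ℕ) + 1) < (List.ofFn A).length := by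
          simp [Nat.succ_lt_succ i.isLt]
        rw [show ((i.castSucc : ℕ) + 1) = (i : ℕ) + 1 by simp,
          List.drop_eq_getElem_cons hlen, List.prod_cons, List.getElem_ofFn]
        simp [Module.End.mul_apply, Fin.val_succ]
        congr 2
    refine ⟨w, ?_, funext fun j => hval j⟩
    -- derive eigen-equation from the last fixed-point equation
    have h := hE (Fin.last n)
    have hS : (∑ i, (A i (v i) - v i))
        = ((List.ofFn A).prod) w - w := by
      rw [Finset.sum_congr rfl fun i _ => by rw [hval i], total_sum_eq A w]
    have hSle : (∑ i, if i ≤ Fin.last n then A i (v i) - v i else 0)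
        = ((List.ofFn A).prod) w - w := by
      rw [Finset.sum_congr rfl fun i _ => by rw [hval i], filter_sum_eq A w (Fin.last n)]
      have hnil : (List.ofFn A).drop ((Fin.last n : ℕ) + 1) = [] := by
        apply List.drop_eq_nil_of_le
        simp
      rw [hnil]
      simp
    rw [hS, hSle, show v (Fin.last n) = w from rfl] at h
    simp only [LinearMap.smul_apply]
    linear_combination (norm := module) h
  · rintro ⟨w, hw, rfl⟩
    intro k
    rw [bconv_fixed_iff A lam k]
    rw [total_sum_eq A w, filter_sum_eq A w k]
    simp only [LinearMap.smul_apply] at hw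
    linear_combination (norm := module) hw
end

section
/- With notation as in the definition of the convolution B_1,...,B_r ∈ GL(V^r) of (A_1,...,A_r) with λ ∈ K^×, one has ∩_{k=1}^r ker(B_k − 1) = ker(B_1 B_2 ⋯ B_r − 1). -/
open Module

variable {K : Type*} [Field K] {V : Type*} [AddCommGroup V] [Module K V]

lemma Bconv_apply_ne {r : ℕ} (A : Fin r → Module.End K V) (lam : K) (k : Fin r)
    (w : Fin r → V) (j : Fin r) (h : j ≠ k) : Bconv A lam k w j = w j := by
  simp [Bconv, LinearMap.pi_apply, h]

lemma prod_fix {r : ℕ} (A : Fin r → Module.End K V) (lam : K) (v : Fin r → V)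
    (l : List (Fin r)) (h : ∀ k ∈ l, Bconv A lam k v = v) :
    ((l.map (Bconv A lam)).prod) v = v := by
  induction l with
  | nil => simp
  | cons k l ih =>
    simp only [List.map_cons, List.prod_cons, Module.End.mul_apply]
    rw [ih (fun k hk => h k (by simp [hk])), h k (by simp)]

lemma prod_apply_ne {r : ℕ} (A : Fin r → Module.End K V) (lam : K)
    (l : List (Fin r)) (w : Fin r → V) (m : Fin r) (h : ∀ k ∈ l, k ≠ m) :
    ((l.map (Bconv A lam)).prod) w m = w m := by
  induction l generalizing w with
  | nil => simp
  | cons k l ih =>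
    simp only [List.map_cons, List.prod_cons, Module.End.mul_apply]
    rw [Bconv_apply_ne _ _ _ _ _ (Ne.symm (h k (by simp)))]
    exact ih _ (fun k hk => h k (by simp [hk]))

lemma mem_take_finRange {r j : ℕ} {a : Fin r} (h : a ∈ (List.finRange r).take j) :
    (a : ℕ) < j := by
  rw [List.mem_take_iff_getElem] at h
  obtain ⟨i, hi, rfl⟩ := h
  rw [List.getElem_finRange]
  simpa using lt_of_lt_of_le hi (min_le_left _ _)

lemma drop_finRange {r j : ℕ} (hj : j < r) :
    (List.finRange r).drop j = ⟨j, hj⟩ :: (List.finRange r).drop (j + 1) := by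
  rw [List.drop_eq_getElem_cons (by simpa using hj)]
  congr 1
  rw [List.getElem_finRange]
  rfl

/-- `∩ₖ ker(B_k − 1) = ker(B₁B₂⋯B_r − 1)`. -/
theorem stmt1 {r : ℕ} (A : Fin r → Module.End K V) (hA : ∀ i, Function.Bijective (A i))
    (lam : K) (hl0 : lam ≠ 0) :
    {v : Fin r → V | ∀ k, Bconv A lam k v = v} =
      {v : Fin r → V | ((List.ofFn (Bconv A lam)).prod) v = v} := by
  ext v
  simp only [Set.mem_setOf_eq, List.ofFn_eq_map]
  constructor
  · intro h
    exact prod_fix _ _ _ _ (fun k _ => h k)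
  · intro hv
    have key : ∀ d : ℕ, ((((List.finRange r).drop (r - d)).map (Bconv A lam)).prod) v = v ∧
        (∀ j : Fin r, r - d ≤ (j : ℕ) → Bconv A lam j v = v) := by
      intro d
      induction d with
      | zero =>
        constructor
        · rw [List.drop_eq_nil_of_le (by simp)]
          simp
        · intro j hj
          exact absurd hj (by omega)
      | succ d ih =>
        by_cases hd : r ≤ d
        · rw [show r - (d + 1) = r - d by omega]
          exact ih
        · push_neg at hd
          have hjr : r - (d + 1) < r := by omega
          set j : Fin r := ⟨r - (d + 1), hjr⟩ with hjdef
          have hsucc : r - (d + 1) + 1 = r - d := by omega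
          have hdrop : (List.finRange r).drop (r - (d + 1)) =
              j :: (List.finRange r).drop (r - d) := by
            rw [drop_finRange hjr, hsucc]
          have hBj : Bconv A lam j v = v := by
            funext m
            by_cases hm : m = j
            · subst hm
              conv_rhs => rw [← hv]
              conv_rhs =>
                rw [← List.take_append_drop (r - (d + 1)) (List.finRange r),
                  List.map_append, List.prod_append, Module.End.mul_apply]
              rw [hdrop]
              simp only [List.map_cons, List.prod_cons, Module.End.mul_apply, ih.1]
              rw [prod_apply_ne]
              intro k hk
              have := mem_take_finRange hk
              intro hkm
              rw [hkm] at this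
              simp [hjdef] at this
            · exact Bconv_apply_ne _ _ _ _ _ hm
          constructor
          · rw [hdrop]
            simp only [List.map_cons, List.prod_cons, Module.End.mul_apply, ih.1, hBj]
          · intro m hm
            rcases eq_or_lt_of_le hm with h1 | h1
            · have : m = j := by
                apply Fin.ext
                simp [hjdef, ← h1]
              rw [this]; exact hBj
            · exact ih.2 m (by omega)
    intro k
    exact (key r).2 k (by omega)
end

section
/- Let K be a field, A_1,...,A_r ∈ GL(V), λ ∈ K^× with λ ≠ 1, and B_1,...,B_r the convolution of (A_1,...,A_r) with λ. Let K_k ⊆ V^r be the subspace of vectors supported in the k-th component with that component in ker(A_k − 1), let K = ⊕_k K_k, and let L = ∩_k ker(B_k − 1). Then K + L = K ⊕ L, i.e. K ∩ L = 0. -/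
open Module

variable {K : Type*} [Field K] {V : Type*} [AddCommGroup V] [Module K V]

/-- `K ∩ L = 0` : a vector of `V^r` all of whose components are fixed by the
corresponding `A_k` (i.e. lies in `K = ⊕ K_k`) and which is fixed by all the `B_k`
(i.e. lies in `L`) is zero. -/
theorem stmt2 {r : ℕ} (A : Fin r → Module.End K V) (hA : ∀ i, Function.Bijective (A i))
    (lam : K) (hl0 : lam ≠ 0) (hl1 : lam ≠ 1) :
    ∀ v : Fin r → V, (∀ k, A k (v k) = v k) → (∀ k, Bconv A lam k v = v) → v = 0 := by
  intro v hfix hB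
  funext k
  have h := congrFun (hB k) k
  simp only [Bconv, LinearMap.pi_apply, eq_self_iff_true, if_true, LinearMap.sum_apply,
    LinearMap.comp_apply, LinearMap.proj_apply] at h
  have hterm : ∀ i : Fin r, (coeffB A lam k i) (v i) = if i = k then lam • v k else 0 := by
    intro i
    unfold coeffB
    rcases lt_trichotomy i k with h1 | h1 | h1
    · simp [h1, h1.ne, LinearMap.sub_apply, hfix i]
    · simp [h1, hfix k]
    · simp [not_lt_of_gt h1, h1.ne', LinearMap.sub_apply, hfix i]
  rw [Finset.sum_congr rfl (fun i _ => hterm i), Finset.sum_ite_eq' Finset.univ k,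
    if_pos (Finset.mem_univ k)] at h
  have : (lam - 1) • v k = 0 := by
    rw [sub_smul, one_smul, h, sub_self]
  rcases smul_eq_zero.mp this with h2 | h2
  · exact absurd (sub_eq_zero.mp h2) hl1
  · exact h2
end

section
/- Each subspace K_k = {(0,...,0,v,0,...,0) : v ∈ ker(A_k − 1)} (v in position k) of V^r is invariant under all the convolution matrices B_1,...,B_r. -/
open Module

variable {K : Type*} [Field K] {V : Type*} [AddCommGroup V] [Module K V]

/-- Each subspace `K_k = {(0,…,0,v,0,…,0) : v ∈ ker(A_k − 1)}` of `V^r` is invariant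
under all the convolution maps `B_j`. -/
theorem stmt3 {r : ℕ} (A : Fin r → Module.End K V) (hA : ∀ i, Function.Bijective (A i))
    (lam : K) (hl0 : lam ≠ 0) :
    ∀ (j k : Fin r) (v : Fin r → V), (∀ i, i ≠ k → v i = 0) → A k (v k) = v k →
      (∀ i, i ≠ k → (Bconv A lam j v) i = 0) ∧
        A k ((Bconv A lam j v) k) = (Bconv A lam j v) k := by
  intro j k v hv hAk
  have hsub : (A k - 1) (v k) = 0 := by
    simp [LinearMap.sub_apply, hAk]
  have hsum : (∑ i : Fin r, (coeffB A lam j i).comp (LinearMap.proj i)) v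
      = coeffB A lam j k (v k) := by
    simp only [LinearMap.sum_apply, LinearMap.comp_apply, LinearMap.proj_apply]
    rw [Finset.sum_eq_single k]
    · intro i _ hik; rw [hv i hik]; simp
    · simp
  have hcoeff : ∀ m : Fin r, m ≠ k → coeffB A lam m k (v k) = 0 := by
    intro m hmk
    unfold coeffB
    by_cases h1 : k < m
    · simp [h1, hsub]
    · rw [if_neg h1, if_neg (Ne.symm hmk)]
      exact hsub
  have hBi : ∀ i : Fin r, (Bconv A lam j v) i =
      if i = j then coeffB A lam j k (v k) else v i := by
    intro i
    simp only [Bconv, LinearMap.pi_apply]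
    by_cases hij : i = j
    · rw [if_pos hij, if_pos hij, hsum]
    · rw [if_neg hij, if_neg hij]; rfl
  by_cases hjk : j = k
  · subst hjk
    constructor
    · intro i hik
      rw [hBi i, if_neg (by simpa using hik)]
      exact hv i hik
    · rw [hBi j, if_pos rfl]
      unfold coeffB
      simp [hAk]
  · constructor
    · intro i hik
      rw [hBi i]
      by_cases hij : i = j
      · rw [if_pos hij]; exact hcoeff j hjk
      · rw [if_neg hij]; exact hv i hik
    · rw [hBi k, if_neg (Ne.symm hjk)]
      exact hAk
end

section
/- Let λ ≠ 1 in K^×. With the convolution B_1,...,B_r of (A_1,...,A_r) ∈ GL(V)^r with λ, and K, L the subspaces defined as the direct sum of the K_k and the common fixed space of the B_k respectively, the dimension of V^r/(K+L) equals Σ_{k=1}^r rk(A_k − 1) − (dim V − rk(λ·A_1⋯A_r − 1)). -/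
open Module

variable {K : Type*} [Field K] {V : Type*} [AddCommGroup V] [Module K V]

/-- partial product `A m * A (m+1) * ⋯ * A (r-1)`. -/
noncomputable def Qn {r : ℕ} (A : Fin r → Module.End K V) (m : ℕ) : Module.End K V :=
  ((List.ofFn A).drop m).prod

lemma Qn_ge {r : ℕ} (A : Fin r → Module.End K V) {m : ℕ} (h : r ≤ m) : Qn A m = 1 := by
  unfold Qn
  rw [List.drop_of_length_le (by simpa using h)]
  simp

lemma Qn_succ {r : ℕ} (A : Fin r → Module.End K V) {m : ℕ} (h : m < r) :
    Qn A m = A ⟨m, h⟩ * Qn A (m + 1) := by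
  unfold Qn
  rw [List.drop_eq_getElem_cons (by simpa using h)]
  simp

lemma mem_BK {r : ℕ} (A : Fin r → Module.End K V) (lam : K) (k : Fin r) (x : Fin r → V) :
    x ∈ LinearMap.ker (Bconv A lam k - 1) ↔ (∑ i, (coeffB A lam k i) (x i)) = x k := by
  simp only [LinearMap.mem_ker, LinearMap.sub_apply, Module.End.one_apply, sub_eq_zero]
  constructor
  · intro h
    have := congrFun h k
    simpa [Bconv] using this
  · intro h
    funext j
    by_cases hj : j = k
    · subst hj; simpa [Bconv] using h
    · simp [Bconv, hj]

/-- telescoping sum lemma -/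
lemma telescope (lam : K) (g : ℕ → V) (r k : ℕ) (hk : k < r) :
    (∑ i ∈ Finset.range r,
      (if i < k then lam • (g i - g (i + 1)) else if i = k then lam • g k
        else g i - g (i + 1)))
      = lam • g 0 - g r + g (k + 1) := by
  have h1 : k + 1 ≤ r := hk
  rw [← Finset.sum_range_add_sum_Ico _ h1, Finset.sum_range_succ]
  have e1 : (∑ i ∈ Finset.range k,
      (if i < k then lam • (g i - g (i + 1)) else if i = k then lam • g k
        else g i - g (i + 1))) = lam • (g 0 - g k) := by
    have e : (∑ i ∈ Finset.range k,
        (if i < k then lam • (g i - g (i + 1)) else if i = k then lam • g k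
          else g i - g (i + 1))) = ∑ i ∈ Finset.range k, lam • (g i - g (i + 1)) :=
      Finset.sum_congr rfl fun i hi => if_pos (Finset.mem_range.1 hi)
    rw [e, ← Finset.smul_sum, Finset.sum_range_sub' g k]
  have e2 : (∑ i ∈ Finset.Ico (k + 1) r,
      (if i < k then lam • (g i - g (i + 1)) else if i = k then lam • g k
        else g i - g (i + 1))) = g (k + 1) - g r := by
    have e : (∑ i ∈ Finset.Ico (k + 1) r,
        (if i < k then lam • (g i - g (i + 1)) else if i = k then lam • g k
          else g i - g (i + 1))) = ∑ i ∈ Finset.Ico (k + 1) r, (g i - g (i + 1)) := by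
      refine Finset.sum_congr rfl fun i hi => ?_
      have := (Finset.mem_Ico.1 hi).1
      rw [if_neg (by omega), if_neg (by omega)]
    rw [e, Finset.sum_Ico_eq_sub _ h1, Finset.sum_range_sub' g, Finset.sum_range_sub' g]
    abel
  rw [e1, e2, if_neg (lt_irrefl k), if_pos rfl, smul_sub]
  abel

lemma Esum_Q {r : ℕ} (A : Fin r → Module.End K V) (lam : K) (k : Fin r) (v : V) :
    (∑ i : Fin r, (coeffB A lam k i) (Qn A ((i : ℕ) + 1) v))
      = lam • (Qn A 0 v) - v + Qn A ((k : ℕ) + 1) v := by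
  have key : ∀ i : Fin r, (coeffB A lam k i) (Qn A ((i : ℕ) + 1) v)
      = (if (i : ℕ) < (k : ℕ) then lam • (Qn A (i : ℕ) v - Qn A ((i : ℕ) + 1) v)
          else if (i : ℕ) = (k : ℕ) then lam • Qn A (k : ℕ) v
          else Qn A (i : ℕ) v - Qn A ((i : ℕ) + 1) v) := by
    intro i
    have hQ : (A i) (Qn A ((i : ℕ) + 1) v) = Qn A (i : ℕ) v := by
      conv_rhs => rw [Qn_succ A i.isLt]
      simp [Fin.eta]
    unfold coeffB
    rcases lt_trichotomy i k with h | h | h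
    · rw [if_pos h, if_pos (by exact_mod_cast h)]
      simp only [LinearMap.smul_apply, LinearMap.sub_apply, Module.End.one_apply, hQ]
    · subst h
      rw [if_neg (lt_irrefl _), if_pos rfl, if_neg (lt_irrefl _), if_pos rfl]
      simp only [LinearMap.smul_apply, hQ]
    · rw [if_neg (not_lt.2 h.le), if_neg h.ne',
        if_neg (by exact_mod_cast not_lt.2 h.le : ¬ (i : ℕ) < (k : ℕ)),
        if_neg (fun hc => h.ne' (Fin.ext hc))]
      simp only [LinearMap.sub_apply, Module.End.one_apply, hQ]
  rw [Finset.sum_congr rfl fun i _ => key i]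
  have h2 := Fin.sum_univ_eq_sum_range
      (fun m => if m < (k : ℕ) then lam • (Qn A m v - Qn A (m + 1) v)
          else if m = (k : ℕ) then lam • Qn A (k : ℕ) v
          else Qn A m v - Qn A (m + 1) v) r
  rw [h2]
  have T := telescope lam (fun m => Qn A m v) r (k : ℕ) k.isLt
  rw [T, Qn_ge A le_rfl]
  simp

/-- consecutive relation for members of L -/
lemma L_rec {r : ℕ} (A : Fin r → Module.End K V) {lam : K} (hl : lam ≠ 1) (x : Fin r → V)
    (hx : ∀ k, (∑ i, (coeffB A lam k i) (x i)) = x k)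
    (k k' : Fin r) (hsucc : (k' : ℕ) = (k : ℕ) + 1) :
    x k = (A k') (x k') := by
  have hkk' : k < k' := by rw [Fin.lt_def, hsucc]; omega
  have hne : k ≠ k' := ne_of_lt hkk'
  have hdiff : ∀ i : Fin r, (coeffB A lam k i) (x i) - (coeffB A lam k' i) (x i)
      = (if i = k then lam • x k else 0) +
        (if i = k' then (1 - lam) • ((A k') (x k')) - x k' else 0) := by
    intro i
    unfold coeffB
    rcases lt_trichotomy i k with h | h | h
    · rw [if_pos h, if_pos (h.trans hkk'), if_neg h.ne, if_neg (h.trans hkk').ne]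
      simp
    · subst h
      rw [if_neg (lt_irrefl i), if_pos rfl, if_pos hkk', if_pos rfl, if_neg hne]
      simp only [LinearMap.smul_apply, LinearMap.sub_apply, Module.End.one_apply, add_zero]
      module
    · have hik : ¬ i < k := not_lt.2 h.le
      have hnik : i ≠ k := h.ne'
      rw [if_neg hik, if_neg hnik]
      by_cases h3 : i = k'
      · subst h3
        rw [if_neg (lt_irrefl i), if_pos rfl, if_neg hnik, if_pos rfl]
        simp only [LinearMap.smul_apply, LinearMap.sub_apply, Module.End.one_apply, zero_add]
        module
      · have hik' : ¬ i < k' := by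
          rw [Fin.lt_def, hsucc]
          have h4 := Fin.lt_def.1 h
          have h5 : (i : ℕ) ≠ (k' : ℕ) := fun hc => h3 (Fin.ext hc)
          omega
        rw [if_neg hik', if_neg h3, if_neg hnik, if_neg h3]
        simp
  have hsum : x k - x k' = lam • x k + ((1 - lam) • ((A k') (x k')) - x k') := by
    calc x k - x k' = (∑ i, (coeffB A lam k i) (x i)) - ∑ i, (coeffB A lam k' i) (x i) := by
          rw [hx k, hx k']
      _ = ∑ i, ((coeffB A lam k i) (x i) - (coeffB A lam k' i) (x i)) := by
          rw [Finset.sum_sub_distrib]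
      _ = ∑ i : Fin r, ((if i = k then lam • x k else 0) +
            (if i = k' then (1 - lam) • ((A k') (x k')) - x k' else 0)) :=
          Finset.sum_congr rfl fun i _ => hdiff i
      _ = lam • x k + ((1 - lam) • ((A k') (x k')) - x k') := by
          rw [Finset.sum_add_distrib, Finset.sum_ite_eq' Finset.univ k,
            Finset.sum_ite_eq' Finset.univ k']
          simp
  have h1l : (1 : K) - lam ≠ 0 := sub_ne_zero.2 (Ne.symm hl)
  have e : (1 - lam) • (x k) - (1 - lam) • ((A k') (x k'))
      = (x k - x k') - (lam • x k + ((1 - lam) • ((A k') (x k')) - x k')) := by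
    module
  rw [hsum, sub_self] at e
  exact smul_right_injective V h1l (sub_eq_zero.1 e)

lemma mem_L_iff {r : ℕ} (A : Fin r → Module.End K V) (lam : K) (x : Fin r → V) :
    x ∈ (⨅ k : Fin r, LinearMap.ker (Bconv A lam k - 1)) ↔
      ∀ k, (∑ i, (coeffB A lam k i) (x i)) = x k := by
  simp only [Submodule.mem_iInf, mem_BK]

lemma L_eq_Q {r : ℕ} (A : Fin (r + 1) → Module.End K V) {lam : K} (hl : lam ≠ 1)
    (x : Fin (r + 1) → V) (hx : ∀ k, (∑ i, (coeffB A lam k i) (x i)) = x k) :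
    ∀ d m (h : m < r + 1), r - m ≤ d →
      x ⟨m, h⟩ = Qn A (m + 1) (x ⟨r, Nat.lt_succ_self r⟩) := by
  intro d
  induction d with
  | zero =>
    intro m h hd
    have hm : m = r := by omega
    subst hm
    rw [Qn_ge A (by omega)]
    simp
  | succ d ih =>
    intro m h hd
    by_cases hm : m = r
    · subst hm
      rw [Qn_ge A (by omega)]
      simp
    · have hm1 : m + 1 < r + 1 := by omega
      have hrec := L_rec A hl x hx ⟨m, h⟩ ⟨m + 1, hm1⟩ rfl
      rw [hrec, ih (m + 1) hm1 (by omega)]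
      conv_rhs => rw [Qn_succ A hm1]
      rfl

lemma L_last_ker {r : ℕ} (A : Fin (r + 1) → Module.End K V) {lam : K} (hl : lam ≠ 1)
    (x : Fin (r + 1) → V) (hx : ∀ k, (∑ i, (coeffB A lam k i) (x i)) = x k) :
    (lam • Qn A 0 - 1) (x ⟨r, Nat.lt_succ_self r⟩) = 0 := by
  set v := x ⟨r, Nat.lt_succ_self r⟩ with hv
  have hlast := hx ⟨r, Nat.lt_succ_self r⟩
  have heq : ∀ i : Fin (r + 1), x i = Qn A ((i : ℕ) + 1) v := by
    intro i
    have := L_eq_Q A hl x hx (r - (i : ℕ)) (i : ℕ) i.isLt le_rfl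
    simpa [Fin.eta] using this
  rw [Finset.sum_congr rfl fun i _ => by rw [heq i], Esum_Q] at hlast
  have : Qn A ((r : ℕ) + 1) v = v := by rw [Qn_ge A (by omega)]; simp
  rw [this] at hlast
  simp only [LinearMap.sub_apply, LinearMap.smul_apply, Module.End.one_apply]
  have : x ⟨r, Nat.lt_succ_self r⟩ = v := rfl
  rw [this] at hlast
  abel_nf
  abel_nf at hlast
  linear_combination (norm := abel_nf) hlast

lemma L_mem_of_ker {r : ℕ} (A : Fin (r + 1) → Module.End K V) (lam : K) (v : V)
    (hv : (lam • Qn A 0 - 1) v = 0) (k : Fin (r + 1)) :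
    (∑ i, (coeffB A lam k i) (Qn A ((i : ℕ) + 1) v)) = Qn A ((k : ℕ) + 1) v := by
  rw [Esum_Q]
  simp only [LinearMap.sub_apply, LinearMap.smul_apply, Module.End.one_apply, sub_eq_zero] at hv
  rw [hv]
  abel

lemma finrank_pi_submodule {n : ℕ} [FiniteDimensional K V] (p : Fin n → Submodule K V) :
    finrank K (Submodule.pi Set.univ p) = ∑ i, finrank K (p i) := by
  classical
  let f : (Π i, p i) →ₗ[K] (Fin n → V) :=
    LinearMap.pi fun i => (p i).subtype.comp (LinearMap.proj i)
  have hinj : Function.Injective f := by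
    intro a b hab
    funext i
    exact Subtype.ext (congrFun hab i)
  have hrange : LinearMap.range f = Submodule.pi Set.univ p := by
    ext x
    constructor
    · rintro ⟨y, rfl⟩
      intro i _
      exact (y i).2
    · intro hx
      exact ⟨fun i => ⟨x i, hx i (Set.mem_univ i)⟩, rfl⟩
  rw [← hrange, ← LinearEquiv.finrank_eq (LinearEquiv.ofInjective f hinj),
    Module.finrank_pi_fintype]

noncomputable def Lequiv {r : ℕ} (A : Fin (r + 1) → Module.End K V) {lam : K} (hl : lam ≠ 1) :
    ↥(⨅ k : Fin (r + 1), LinearMap.ker (Bconv A lam k - 1)) ≃ₗ[K]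
      ↥(LinearMap.ker (lam • Qn A 0 - 1)) := by
  set L := ⨅ k : Fin (r + 1), LinearMap.ker (Bconv A lam k - 1) with hL
  set P : Module.End K V := lam • Qn A 0 - 1 with hP
  have h₁ : ∀ x ∈ L, (LinearMap.proj ⟨r, Nat.lt_succ_self r⟩ :
      (Fin (r + 1) → V) →ₗ[K] V) x ∈ LinearMap.ker P := by
    intro x hx
    exact LinearMap.mem_ker.2 (L_last_ker A hl x ((mem_L_iff A lam x).1 hx))
  have h₂ : ∀ v ∈ LinearMap.ker P,
      (LinearMap.pi fun k : Fin (r + 1) =>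
        (Qn A ((k : ℕ) + 1) : V →ₗ[K] V)) v ∈ L := by
    intro v hv
    rw [hL, mem_L_iff]
    intro k
    simpa using L_mem_of_ker A lam v (LinearMap.mem_ker.1 hv) k
  refine LinearEquiv.ofLinear
    (LinearMap.restrict _ h₁) (LinearMap.restrict _ h₂) ?_ ?_
  · ext ⟨v, hv⟩
    show Qn A (r + 1) v = v
    rw [Qn_ge A (by omega)]
    rfl
  · ext ⟨x, hx⟩ k
    show Qn A ((k : ℕ) + 1) (x ⟨r, Nat.lt_succ_self r⟩) = x k
    have h3 := L_eq_Q A hl x ((mem_L_iff A lam x).1 hx) (r - (k : ℕ)) (k : ℕ) k.isLt le_rfl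
    simp only [Fin.eta] at h3
    exact h3.symm

lemma KL_bot {r : ℕ} (A : Fin (r + 1) → Module.End K V) {lam : K} (hl : lam ≠ 1) :
    (Submodule.pi Set.univ fun k => LinearMap.ker (A k - 1)) ⊓
      (⨅ k : Fin (r + 1), LinearMap.ker (Bconv A lam k - 1)) = ⊥ := by
  rw [eq_bot_iff]
  rintro x ⟨hxK, hxL⟩
  have hx := (mem_L_iff A lam x).1 hxL
  set v := x ⟨r, Nat.lt_succ_self r⟩ with hv
  have hfix : ∀ k : Fin (r + 1), (A k) (x k) = x k := by
    intro k
    have := hxK k (Set.mem_univ k)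
    simp only [SetLike.mem_coe, LinearMap.mem_ker, LinearMap.sub_apply, Module.End.one_apply,
      sub_eq_zero] at this
    exact this
  have heq : ∀ i : Fin (r + 1), x i = Qn A ((i : ℕ) + 1) v := by
    intro i
    have := L_eq_Q A hl x hx (r - (i : ℕ)) (i : ℕ) i.isLt le_rfl
    simpa [Fin.eta] using this
  have hQfix : ∀ d m, r + 1 - m ≤ d → Qn A m v = v := by
    intro d
    induction d with
    | zero =>
      intro m hm
      rw [Qn_ge A (by omega)]
      rfl
    | succ d ih =>
      intro m hm
      by_cases h : r + 1 ≤ m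
      · rw [Qn_ge A h]; rfl
      · push_neg at h
        rw [Qn_succ A h]
        show (A ⟨m, h⟩) (Qn A (m + 1) v) = v
        rw [ih (m + 1) (by omega)]
        have := hfix ⟨m, h⟩
        rw [heq ⟨m, h⟩] at this
        rw [ih (m + 1) (by omega)] at this
        exact this
  have hker := L_last_ker A hl x hx
  rw [← hv] at hker
  simp only [LinearMap.sub_apply, LinearMap.smul_apply, Module.End.one_apply,
    sub_eq_zero] at hker
  rw [hQfix (r + 1) 0 (by omega)] at hker
  have hv0 : v = 0 := by
    by_contra hne
    exact hl ((smul_left_injective K hne) (by simpa using hker))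
  have : x = 0 := by
    funext i
    rw [heq i, hv0]
    simp
  simp [this]

/-- The dimension formula for the middle convolution:
`dim V^r/(K+L) = Σ rk(A_k − 1) − (dim V − rk(λ·A₁⋯A_r − 1))`, stated additively. -/
theorem stmt4 {r : ℕ} [FiniteDimensional K V]
    (A : Fin r → Module.End K V) (hA : ∀ i, Function.Bijective (A i))
    (lam : K) (hl0 : lam ≠ 0) (hl1 : lam ≠ 1) :
    Module.finrank K ((Fin r → V) ⧸
        ((Submodule.pi Set.univ fun k => LinearMap.ker (A k - 1)) ⊔
          ⨅ k : Fin r, LinearMap.ker (Bconv A lam k - 1)))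
      + Module.finrank K V =
    (∑ k : Fin r, Module.finrank K (LinearMap.range (A k - 1)))
      + Module.finrank K (LinearMap.range (lam • (List.ofFn A).prod - 1)) := by
  rcases r with _ | r
  · have h0 : (List.ofFn A).prod = 1 := by simp
    rw [h0]
    haveI : Subsingleton ((Fin 0 → V) ⧸
        ((Submodule.pi Set.univ fun k => LinearMap.ker (A k - 1)) ⊔
          ⨅ k : Fin 0, LinearMap.ker (Bconv A lam k - 1))) :=
      (Submodule.Quotient.mk_surjective _).subsingleton
    have hq : finrank K ((Fin 0 → V) ⧸
        ((Submodule.pi Set.univ fun k => LinearMap.ker (A k - 1)) ⊔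
          ⨅ k : Fin 0, LinearMap.ker (Bconv A lam k - 1))) = 0 :=
      Module.finrank_zero_of_subsingleton
    rw [hq]
    have h1 : lam • (1 : Module.End K V) - 1 = (lam - 1) • 1 := by
      rw [sub_smul, one_smul]
    have h2 : LinearMap.range ((1 : Module.End K V)) = ⊤ :=
      LinearMap.range_eq_top.2 fun v => ⟨v, rfl⟩
    rw [h1, LinearMap.range_smul _ _ (sub_ne_zero.2 hl1), h2, finrank_top]
    simp
  · set P : Module.End K V := lam • (List.ofFn A).prod - 1 with hPdef
    have hP0 : P = lam • Qn A 0 - 1 := by rw [hPdef]; unfold Qn; rw [List.drop_zero]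
    set Ksub := Submodule.pi Set.univ fun k : Fin (r + 1) => LinearMap.ker (A k - 1) with hK
    set L := ⨅ k : Fin (r + 1), LinearMap.ker (Bconv A lam k - 1) with hLdef
    have e1 : finrank K ((Fin (r + 1) → V) ⧸ (Ksub ⊔ L)) + finrank K ↥(Ksub ⊔ L)
        = finrank K (Fin (r + 1) → V) := Submodule.finrank_quotient_add_finrank _
    have e2 : finrank K ↥(Ksub ⊔ L) + finrank K ↥(Ksub ⊓ L)
        = finrank K Ksub + finrank K L := Submodule.finrank_sup_add_finrank_inf_eq _ _
    have e3 : finrank K ↥(Ksub ⊓ L) = 0 := by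
      rw [hK, hLdef, KL_bot A hl1]; exact finrank_bot K _
    have e4 : finrank K Ksub = ∑ k, finrank K (LinearMap.ker (A k - 1)) :=
      finrank_pi_submodule _
    have e5 : finrank K L = finrank K (LinearMap.ker P) := by
      rw [hP0]; exact (Lequiv A hl1).finrank_eq
    have e6 : (∑ k : Fin (r + 1), finrank K (LinearMap.range (A k - 1)))
        + (∑ k, finrank K (LinearMap.ker (A k - 1)))
        = ∑ k : Fin (r + 1), finrank K V := by
      rw [← Finset.sum_add_distrib]
      exact Finset.sum_congr rfl fun k _ => LinearMap.finrank_range_add_finrank_ker _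
    have e7 : finrank K (LinearMap.range P) + finrank K (LinearMap.ker P) = finrank K V :=
      LinearMap.finrank_range_add_finrank_ker _
    have e8 : finrank K (Fin (r + 1) → V) = ∑ k : Fin (r + 1), finrank K V :=
      Module.finrank_pi_fintype K
    omega
end

section
/- Let K have characteristic ≠ 2, let A_1,...,A_r ∈ GL_n(K) preserve a symmetric (resp. alternating) bilinear form G, i.e. A_i^{tr} G A_i = G. Then for λ = −1 the invariant form H of the convolution (with λ^{1/2} a square root of −1, or working over a field containing i), restricted to the middle convolution space, is alternating (resp. symmetric); i.e. middle convolution with λ = −1 exchanges orthogonal and symplectic invariant forms. -/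
open Matrix

variable {K : Type*} [Field K]

/-- The `(i,j)` block of the invariant form `H`, where `s = λ^{1/2}`. -/
noncomputable def Hblock {n r : ℕ} (G : Matrix (Fin n) (Fin n) K)
    (A Ainv : Fin r → Matrix (Fin n) (Fin n) K) (lam s : K) (i j : Fin r) :
    Matrix (Fin n) (Fin n) K :=
  if i = j then s • (G * (Ainv i - 1) * (A i - lam⁻¹ • 1))
  else if i < j then s⁻¹ • (G * (Ainv i - 1) * (A j - 1))
  else s • (G * (Ainv i - 1) * (A j - 1))

/-- The invariant form `H ∈ K^{nr×nr}` of the convolution. -/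
noncomputable def Hmat {n r : ℕ} (G : Matrix (Fin n) (Fin n) K)
    (A Ainv : Fin r → Matrix (Fin n) (Fin n) K) (lam s : K) :
    Matrix (Fin r × Fin n) (Fin r × Fin n) K :=
  Matrix.of fun p q => Hblock G A Ainv lam s p.1 q.1 p.2 q.2

section aux

variable {R : Type*} [Ring R]

lemma auxL1 (a av b bv g : R) (h1 : a * g = g * bv) (h2 : av * g = g * b)
    (h3 : bv * b = 1) : (a + 1) * ((av - 1) * g) = -(g * (bv - 1) * (b + 1)) := by
  have e1 : (a + 1) * ((av - 1) * g) = a * (av * g) + av * g - a * g - g := by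
    noncomm_ring
  have e2 : g * (bv - 1) * (b + 1) = g * (bv * b) + g * bv - g * b - g := by
    noncomm_ring
  have e3 : a * (av * g) = g * (bv * b) := by
    rw [h2, ← mul_assoc, h1, mul_assoc]
  rw [e1, e2, e3, h1, h2, h3]
  noncomm_ring

lemma auxL2 (a c g bvi bj : R) (h1 : a * g = g * bvi) (h2 : c * g = g * bj) :
    (a - 1) * ((c - 1) * g) = g * (bvi - 1) * (bj - 1) := by
  have e1 : (a - 1) * ((c - 1) * g) = a * (c * g) - c * g - a * g + g := by
    noncomm_ring
  have e2 : g * (bvi - 1) * (bj - 1) = g * bvi * bj - g * bvi - g * bj + g := by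
    noncomm_ring
  have e3 : a * (c * g) = g * bvi * bj := by rw [h2, ← mul_assoc, h1]
  rw [e1, e2, e3, h1, h2]
  noncomm_ring

end aux

lemma blockKey {n r : ℕ} (G : Matrix (Fin n) (Fin n) K)
    (A Ainv : Fin r → Matrix (Fin n) (Fin n) K) (s ε : K)
    (hs' : s⁻¹ = -s)
    (hA' : ∀ i, Ainv i * A i = 1)
    (hAG : ∀ i, (A i)ᵀ * G = G * Ainv i)
    (hAinvG : ∀ i, (Ainv i)ᵀ * G = G * A i)
    (hGt : Gᵀ = ε • G) (i j : Fin r) :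
    (Hblock G A Ainv (-1) s j i)ᵀ = (-ε) • Hblock G A Ainv (-1) s i j := by
  have hone : ((-1 : K)⁻¹ • (1 : Matrix (Fin n) (Fin n) K)) = -1 := by
    norm_num
  rcases lt_trichotomy i j with h | h | h
  · -- i < j : Hblock j i is the `else` branch, Hblock i j is the `i < j` branch
    simp only [Hblock, if_neg h.ne', if_neg (asymm h), if_neg h.ne, if_pos h]
    have l2 := auxL2 ((A i)ᵀ) ((Ainv j)ᵀ) G (Ainv i) (A j) (hAG i) (hAinvG j)
    have tr : (G * (Ainv j - 1) * (A i - 1))ᵀ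
        = ((A i)ᵀ - 1) * (((Ainv j)ᵀ - 1) * Gᵀ) := by
      rw [transpose_mul, transpose_mul, transpose_sub, transpose_sub,
        transpose_one]
    rw [transpose_smul, tr, hGt, mul_smul_comm, mul_smul_comm, l2, hs']
    rw [smul_smul, smul_smul]
    congr 1
    ring
  · -- i = j : diagonal
    subst h
    simp only [Hblock, eq_self_iff_true, if_true, hone, sub_neg_eq_add]
    have l1 := auxL1 ((A i)ᵀ) ((Ainv i)ᵀ) (A i) (Ainv i) G (hAG i) (hAinvG i)
      (hA' i)
    have tr : (G * (Ainv i - 1) * (A i + 1))ᵀ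
        = ((A i)ᵀ + 1) * (((Ainv i)ᵀ - 1) * Gᵀ) := by
      rw [transpose_mul, transpose_mul, transpose_sub, transpose_add,
        transpose_one]
    rw [transpose_smul, tr, hGt, mul_smul_comm, mul_smul_comm, l1,
      smul_neg, smul_neg, smul_smul, smul_smul, ← neg_smul]
    congr 1
    ring
  · -- j < i : Hblock j i is the `j < i` branch, Hblock i j is the `else` branch
    simp only [Hblock, if_neg h.ne, if_pos h, if_neg h.ne', if_neg (asymm h)]
    have l2 := auxL2 ((A i)ᵀ) ((Ainv j)ᵀ) G (Ainv i) (A j) (hAG i) (hAinvG j)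
    have tr : (G * (Ainv j - 1) * (A i - 1))ᵀ
        = ((A i)ᵀ - 1) * (((Ainv j)ᵀ - 1) * Gᵀ) := by
      rw [transpose_mul, transpose_mul, transpose_sub, transpose_sub,
        transpose_one]
    rw [transpose_smul, tr, hGt, mul_smul_comm, mul_smul_comm, l2, hs']
    rw [smul_smul, smul_smul]
    congr 1
    ring

lemma matKey {n r : ℕ} (G : Matrix (Fin n) (Fin n) K)
    (A Ainv : Fin r → Matrix (Fin n) (Fin n) K) (s ε : K)
    (hs' : s⁻¹ = -s)
    (hA' : ∀ i, Ainv i * A i = 1)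
    (hAG : ∀ i, (A i)ᵀ * G = G * Ainv i)
    (hAinvG : ∀ i, (Ainv i)ᵀ * G = G * A i)
    (hGt : Gᵀ = ε • G) :
    (Hmat G A Ainv (-1) s)ᵀ = (-ε) • Hmat G A Ainv (-1) s := by
  ext p q
  have hb := blockKey G A Ainv s ε hs' hA' hAG hAinvG hGt p.1 q.1
  have := congrFun (congrFun hb p.2) q.2
  simp only [transpose_apply, Matrix.smul_apply, smul_eq_mul] at this
  simpa [Hmat, transpose_apply, Matrix.smul_apply] using this

/-- For `λ = −1` the middle convolution exchanges orthogonal and symplectic invariant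
forms: if `G` is symmetric then `H` is alternating, and if `G` is alternating then `H`
is symmetric. Here `s` is a square root of `−1` in `K` and `char K ≠ 2`. -/
theorem stmt6 {n r : ℕ} (hchar : (2 : K) ≠ 0)
    (A Ainv : Fin r → Matrix (Fin n) (Fin n) K)
    (hA : ∀ i, A i * Ainv i = 1) (hA' : ∀ i, Ainv i * A i = 1)
    (s : K) (hs : s * s = -1)
    (G : Matrix (Fin n) (Fin n) K) (hG : ∀ i, (A i)ᵀ * G * A i = G) :
    (Gᵀ = G → (Hmat G A Ainv (-1) s)ᵀ = -(Hmat G A Ainv (-1) s)) ∧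
      (Gᵀ = -G → (Hmat G A Ainv (-1) s)ᵀ = Hmat G A Ainv (-1) s) := by
  have hs' : s⁻¹ = -s := by
    have : s * (-s) = 1 := by rw [mul_neg, hs, neg_neg]
    exact inv_eq_of_mul_eq_one_right this
  have hAG : ∀ i, (A i)ᵀ * G = G * Ainv i := by
    intro i
    have h : (A i)ᵀ * G * A i * Ainv i = G * Ainv i := by rw [hG i]
    rwa [mul_assoc ((A i)ᵀ * G), hA, mul_one] at h
  have hAinvG : ∀ i, (Ainv i)ᵀ * G = G * A i := by
    intro i
    have h : (Ainv i)ᵀ * ((A i)ᵀ * G * A i) = (Ainv i)ᵀ * G := by rw [hG i]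
    have h2 : (Ainv i)ᵀ * ((A i)ᵀ * G * A i) = G * A i := by
      rw [← mul_assoc, ← mul_assoc, ← transpose_mul, hA, transpose_one, one_mul]
    rw [← h, h2]
  constructor
  · intro hGt
    have := matKey G A Ainv s 1 hs' hA' hAG hAinvG (by rw [one_smul]; exact hGt)
    rw [this, neg_smul, one_smul]
  · intro hGt
    have := matKey G A Ainv s (-1) hs' hA' hAG hAinvG
      (by rw [neg_smul, one_smul]; exact hGt)
    rw [this, neg_neg, one_smul]
end

section
/- Let G be a group, ρ: G → GL(V) a representation, and C^1(G,V) the space of crossed homomorphisms δ: G → V satisfying δ(g g') = δ(g') + ρ(g')^{−1} δ(g). Let Π be the free group on generators α_1,...,α_{r+1}, let ρ_λ send α_i to A_i ∈ GL(V) for i ≤ r and α_{r+1} to λ·1 with λ ∈ K^×, λ ≠ 1. Then a crossed homomorphism δ ∈ C^1(Π, V_λ) with δ([α_{r+1}, α_i]) = 0 for all i = 1,...,r is exact, i.e. there exists v ∈ V with δ(g) = v − ρ_λ(g)^{−1} v for all g ∈ Π. -/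
variable {K : Type*} [Field K] {V : Type*} [AddCommGroup V] [Module K V]

/-- The Pochhammer commutator `[α_{r+1}, α_i] = α_{r+1}⁻¹ α_i⁻¹ α_{r+1} α_i`
in the free group on `α_1, …, α_{r+1}`. -/
def pochhammer' (r : ℕ) (i : Fin r) : FreeGroup (Fin (r + 1)) :=
  (FreeGroup.of (Fin.last r))⁻¹ * (FreeGroup.of i.castSucc)⁻¹ *
    FreeGroup.of (Fin.last r) * FreeGroup.of i.castSucc

/-- A crossed homomorphism `δ : Π → V_λ` vanishing on all commutators
`[α_{r+1}, α_i]` is exact. -/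
theorem stmt7 {r : ℕ} (ρ : FreeGroup (Fin (r + 1)) →* (V ≃ₗ[K] V))
    (A : Fin r → (V ≃ₗ[K] V)) (hAgen : ∀ i : Fin r, ρ (FreeGroup.of i.castSucc) = A i)
    (lam : K) (hl0 : lam ≠ 0) (hl1 : lam ≠ 1)
    (hlast : ∀ v : V, ρ (FreeGroup.of (Fin.last r)) v = lam • v)
    (δ : FreeGroup (Fin (r + 1)) → V)
    (hδ : ∀ g g', δ (g * g') = δ g' + (ρ g')⁻¹ (δ g))
    (hc : ∀ i : Fin r, δ (pochhammer' r i) = 0) :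
    ∃ v : V, ∀ g, δ g = v - (ρ g)⁻¹ v := by
  have hinvapp : ∀ (e : V ≃ₗ[K] V) (w : V), e⁻¹ (e w) = w := fun e w => e.symm_apply_apply w
  have happinv : ∀ (e : V ≃ₗ[K] V) (w : V), e (e⁻¹ w) = w := fun e w => e.apply_symm_apply w
  have hδ1 : δ 1 = 0 := by
    have h := hδ 1 1
    simp only [mul_one, map_one, inv_one, LinearEquiv.coe_one, id_eq] at h
    exact (left_eq_add.mp h)
  have hδinv : ∀ g, δ g⁻¹ = - (ρ g) (δ g) := by
    intro g
    have h := hδ g⁻¹ g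
    rw [inv_mul_cancel, hδ1] at h
    have h2 : (ρ g)⁻¹ (δ g⁻¹) = - δ g := by
      linear_combination (norm := abel) h.symm
    calc δ g⁻¹ = (ρ g) ((ρ g)⁻¹ (δ g⁻¹)) := (happinv _ _).symm
      _ = (ρ g) (- δ g) := by rw [h2]
      _ = - (ρ g) (δ g) := map_neg _ _
  set a := FreeGroup.of (Fin.last r) with ha
  have hainv : ∀ w : V, (ρ a)⁻¹ w = lam⁻¹ • w := by
    intro w
    have hw : ρ a (lam⁻¹ • w) = w := by
      rw [map_smul, hlast, smul_smul, inv_mul_cancel₀ hl0, one_smul]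
    calc (ρ a)⁻¹ w = (ρ a)⁻¹ (ρ a (lam⁻¹ • w)) := by rw [hw]
      _ = lam⁻¹ • w := hinvapp _ _
  have hne : (1 : K) - lam⁻¹ ≠ 0 := by
    intro h
    exact hl1 (by rw [← inv_inv lam, (inv_eq_one).mpr ((sub_eq_zero.mp h).symm)])
  set c : K := ((1 : K) - lam⁻¹)⁻¹ with hcdef
  set v : V := c • δ a with hv
  have hone : c * ((1 : K) - lam⁻¹) = 1 := inv_mul_cancel₀ hne
  have hva : δ a = v - (ρ a)⁻¹ v := by
    rw [hainv, hv, smul_smul, ← sub_smul]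
    have : c - lam⁻¹ * c = 1 := by rw [← hone]; ring
    rw [this, one_smul]
  have hgen : ∀ i : Fin r, δ (FreeGroup.of i.castSucc) =
      v - (ρ (FreeGroup.of i.castSucc))⁻¹ v := by
    intro i
    set b := FreeGroup.of i.castSucc with hb
    have h := hc i
    rw [pochhammer'] at h
    rw [hδ (a⁻¹ * b⁻¹ * a) b, hδ (a⁻¹ * b⁻¹) a, hδ a⁻¹ b⁻¹, hδinv, hδinv,
      map_inv, inv_inv, hainv] at h
    simp only [map_add, map_smul, map_neg] at h
    rw [hinvapp, hinvapp, hlast, smul_add, smul_neg, smul_neg, smul_smul,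
      inv_mul_cancel₀ hl0, one_smul] at h
    have h2 : δ b - lam⁻¹ • δ b = δ a - (ρ b)⁻¹ (δ a) := by
      linear_combination (norm := abel) h
    calc δ b = (c * (1 - lam⁻¹)) • δ b := by rw [hone, one_smul]
      _ = c • (δ b - lam⁻¹ • δ b) := by rw [mul_sub, mul_one, sub_smul, mul_smul, ← smul_sub]
      _ = c • (δ a - (ρ b)⁻¹ (δ a)) := by rw [h2]
      _ = v - (ρ b)⁻¹ v := by rw [smul_sub, hv, map_smul]
  refine ⟨v, ?_⟩
  intro g
  induction g using FreeGroup.induction_on with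
  | C1 => simp [hδ1]
  | of x =>
    induction x using Fin.lastCases with
    | last => exact hva
    | cast i => exact hgen i
  | inv_of x hx =>
    rw [hδinv, hx, map_sub, happinv, map_inv, inv_inv]
    abel
  | mul g g' hg hg' =>
    rw [hδ, hg, hg', map_mul, mul_inv_rev, map_sub]
    have : ((ρ g')⁻¹ * (ρ g)⁻¹) v = (ρ g')⁻¹ ((ρ g)⁻¹ v) := rfl
    rw [this]
    abel
end

section
/- Let a_1,...,a_r ∈ K^{n×n}, μ ∈ K, and define the additive convolution matrices b_k ∈ K^{nr×nr}: b_k is zero outside the k-th block row, whose k-th block row is (a_1,...,a_{k−1}, a_k+μ, a_{k+1},...,a_r). If μ ≠ 0, then the common kernel l := ∩_{k=1}^r ker(b_k) equals {(v,v,...,v) : v ∈ ker(a_1 + ⋯ + a_r + μ)}. -/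
variable {K : Type*} [Field K]

/-- The additive convolution matrix `b_k ∈ K^{nr×nr}`: zero outside the `k`-th
block row, whose `k`-th block row is `(a₁,…,a_{k−1}, a_k+μ, a_{k+1},…,a_r)`. -/
def bconv {n r : ℕ} (a : Fin r → Matrix (Fin n) (Fin n) K) (μ : K) (k : Fin r) :
    Matrix (Fin r × Fin n) (Fin r × Fin n) K :=
  Matrix.of fun p q =>
    if p.1 = k then
      (if q.1 = k then a k + μ • (1 : Matrix (Fin n) (Fin n) K) else a q.1) p.2 q.2
    else 0

lemma bconv_mulVec {n r : ℕ} (a : Fin r → Matrix (Fin n) (Fin n) K) (μ : K) (k : Fin r)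
    (v : Fin r × Fin n → K) (p : Fin r × Fin n) :
    (bconv a μ k).mulVec v p =
      if p.1 = k then (∑ j, (a j).mulVec (fun x => v (j, x)) p.2) + μ * v (k, p.2) else 0 := by
  rcases p with ⟨p1, p2⟩
  simp only [Matrix.mulVec, dotProduct, bconv, Matrix.of_apply]
  rw [Fintype.sum_prod_type]
  by_cases h : p1 = k
  · simp only [h, if_true]
    have step : ∀ q1 : Fin r,
        (∑ q2, (if q1 = k then (a k + μ • (1 : Matrix (Fin n) (Fin n) K)) else a q1) p2 q2 * v (q1, q2))
        = (∑ q2, a q1 p2 q2 * v (q1, q2)) + (if q1 = k then μ * v (k, p2) else 0) := by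
      intro q1
      by_cases hq : q1 = k
      · subst hq
        simp only [if_true, Matrix.add_apply, Matrix.smul_apply, Matrix.one_apply, smul_eq_mul,
          mul_ite, mul_one, mul_zero, add_mul, ite_mul, zero_mul]
        rw [Finset.sum_add_distrib]
        congr 1
        simp [Finset.sum_ite_eq]
      · simp [hq]
    rw [Finset.sum_congr rfl (fun q1 _ => step q1), Finset.sum_add_distrib]
    simp [Finset.sum_ite_eq']
  · simp [h]

lemma sum_mulVec' {n r : ℕ} (a : Fin r → Matrix (Fin n) (Fin n) K) (w : Fin n → K) (x : Fin n) :
    (∑ i, a i).mulVec w x = ∑ i, (a i).mulVec w x := by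
  simp only [Matrix.mulVec, dotProduct, Matrix.sum_apply, Finset.sum_mul]
  rw [Finset.sum_comm]


/-- For `μ ≠ 0`, the common kernel `l = ∩ₖ ker(b_k)` equals
`{(v,…,v) : v ∈ ker(a₁ + ⋯ + a_r + μ)}`. -/
theorem stmt13 {n r : ℕ} (a : Fin r → Matrix (Fin n) (Fin n) K) (μ : K) (hμ : μ ≠ 0) :
    {v : Fin r × Fin n → K | ∀ k, (bconv a μ k).mulVec v = 0} =
      {v : Fin r × Fin n → K | ∃ w : Fin n → K,
        ((∑ i, a i) + μ • (1 : Matrix (Fin n) (Fin n) K)).mulVec w = 0 ∧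
          v = fun p => w p.2} := by
  ext v
  simp only [Set.mem_setOf_eq]
  constructor
  · intro h
    have key : ∀ (k : Fin r) (x : Fin n),
        (∑ j, (a j).mulVec (fun y => v (j, y)) x) + μ * v (k, x) = 0 := by
      intro k x
      have := congrFun (h k) (k, x)
      rw [bconv_mulVec] at this
      simpa using this
    rcases Nat.eq_zero_or_pos r with hr | hr
    · subst hr
      exact ⟨0, by simp, funext fun p => p.1.elim0⟩
    · set k0 : Fin r := ⟨0, hr⟩
      have heq : ∀ (k : Fin r) (x : Fin n), v (k, x) = v (k0, x) := by
        intro k x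
        have h1 := key k x
        have h2 := key k0 x
        have : μ * v (k, x) = μ * v (k0, x) := by linear_combination h1 - h2
        exact mul_left_cancel₀ hμ this
      refine ⟨fun x => v (k0, x), ?_, funext fun p => (heq p.1 p.2).symm ▸ rfl⟩
      funext x
      have := key k0 x
      rw [Matrix.add_mulVec, Matrix.smul_mulVec, Matrix.one_mulVec]
      simp only [Pi.add_apply, Pi.smul_apply, smul_eq_mul, Pi.zero_apply]
      rw [sum_mulVec']
      calc (∑ i, (a i).mulVec (fun x => v (k0, x)) x) + μ * v (k0, x)
          = (∑ j, (a j).mulVec (fun y => v (j, y)) x) + μ * v (k0, x) := by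
            congr 1
            refine Finset.sum_congr rfl fun j _ => ?_
            congr 1
            funext y
            exact (heq j y).symm ▸ rfl
        _ = 0 := key k0 x
  · rintro ⟨w, hw, rfl⟩
    intro k
    funext p
    rw [bconv_mulVec]
    rcases p with ⟨p1, p2⟩
    by_cases h : p1 = k
    · simp only [h, if_true, Pi.zero_apply]
      have := congrFun hw p2
      rw [Matrix.add_mulVec, Matrix.smul_mulVec, Matrix.one_mulVec] at this
      simp only [Pi.add_apply, Pi.smul_apply, smul_eq_mul, Pi.zero_apply] at this
      rw [sum_mulVec'] at this
      exact this
    · simp [h]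
end

section
/- Let μ ≠ 0 and b_1,...,b_r be the additive convolution of (a_1,...,a_r) with μ. Let k_j ⊆ K^{nr} consist of vectors supported in the j-th component with that component in ker(a_j), k := ⊕_j k_j, and l := ∩_j ker(b_j). Then k + l = k ⊕ l, i.e. k ∩ l = 0. Moreover each k_j and l are invariant under all b_1,...,b_r. -/
variable {K : Type*} [Field K]

/-- For `μ ≠ 0`: (1) `k ∩ l = 0`; (2) each `k_j` is invariant under all the `b_i`;
(3) `l` is invariant under all the `b_i`. -/
theorem stmt15 {n r : ℕ} (a : Fin r → Matrix (Fin n) (Fin n) K) (μ : K) (hμ : μ ≠ 0) :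
    (∀ v : Fin r × Fin n → K,
      (∀ j, (a j).mulVec (fun x => v (j, x)) = 0) →
      (∀ j, (bconv a μ j).mulVec v = 0) → v = 0) ∧
    (∀ (j i : Fin r) (v : Fin r × Fin n → K),
      (∀ p : Fin r × Fin n, p.1 ≠ j → v p = 0) →
      (a j).mulVec (fun x => v (j, x)) = 0 →
      (∀ p : Fin r × Fin n, p.1 ≠ j → (bconv a μ i).mulVec v p = 0) ∧
        (a j).mulVec (fun x => (bconv a μ i).mulVec v (j, x)) = 0) ∧
    (∀ (i : Fin r) (v : Fin r × Fin n → K),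
      (∀ j, (bconv a μ j).mulVec v = 0) →
      ∀ j, (bconv a μ j).mulVec ((bconv a μ i).mulVec v) = 0) := by
  refine ⟨?_, ?_, ?_⟩
  · intro v hker hb
    funext p
    have := congrFun (hb p.1) p
    rw [bconv_mulVec] at this
    simp only [if_pos rfl, Pi.zero_apply] at this
    have hs : (∑ j, (a j).mulVec (fun x => v (j, x)) p.2) = 0 := by
      apply Finset.sum_eq_zero
      intro j _
      rw [hker j]; rfl
    rw [hs, zero_add] at this
    have := mul_eq_zero.mp this
    simpa [hμ] using this
  · intro j i v hsupp hker
    -- key: sum over j' of a_{j'} v_{j'} collapses to a_j v_j = 0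
    have hsum : ∀ x, (∑ j', (a j').mulVec (fun y => v (j', y)) x) = 0 := by
      intro x
      rw [Finset.sum_eq_single j]
      · exact congrFun hker x
      · intro j' _ hj'
        have : (fun y => v (j', y)) = 0 := funext fun y => hsupp (j', y) hj'
        rw [this, Matrix.mulVec_zero]; rfl
      · simp
    constructor
    · intro p hp
      rw [bconv_mulVec]
      split_ifs with h
      · rw [hsum p.2, zero_add]
        rw [hsupp (i, p.2) (by simpa [← h] using hp), mul_zero]
      · rfl
    · by_cases hji : j = i
      · subst hji
        have hv : (fun y => (bconv a μ j).mulVec v (j, y)) = μ • fun y => v (j, y) := by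
          funext y; rw [bconv_mulVec]; simp [hsum]
        rw [hv, Matrix.mulVec_smul, hker, smul_zero]
      · have hv : (fun y => (bconv a μ i).mulVec v (j, y)) = 0 := by
          funext y; rw [bconv_mulVec]; simp [hji]
        rw [hv, Matrix.mulVec_zero]
  · intro i v hb j
    rw [hb i, Matrix.mulVec_zero]
end
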